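/- arXiv:1005.1004 — 9 statements merged into one kernel-verified Lean document; each statement's English description precedes it below -/
import Mathlib

section
/- Let S be a monoid and suppose that for all s, t ∈ S, the set R(s,t) is either empty or finitely generated as a right S-subact of S × S. Then the class of left S-acts satisfying Condition (P) is closed under ultraproducts: for every set ι, every ultrafilter φ on ι and every family (B_i)_{i∈ι} of left S-acts each satisfying Condition (P), the ultraproduct of the family (B_i) with respect to φ satisfies Condition (P). -/
universe u v w

open Filter

/-- Condition (P) for a left `S`-act `A`. -/
def CondP (S : Type*) [Monoid S] (A : Type*) [MulAction S A] : Prop :=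
  ∀ (s t : S) (a b : A), s • a = t • b →
    ∃ (c : A) (u v : S), a = u • c ∧ b = v • c ∧ s * u = t * v

/-- `R(s,t) = {(u,v) | s*u = t*v}`. -/
def Rset (S : Type*) [Monoid S] (s t : S) : Set (S × S) :=
  {p | s * p.1 = t * p.2}

/-- A subset of `S × S` is finitely generated as a right `S`-subact. -/
def FGpair (S : Type*) [Monoid S] (R : Set (S × S)) : Prop :=
  ∃ F : Finset (S × S), ↑F ⊆ R ∧
    ∀ p ∈ R, ∃ q ∈ F, ∃ w : S, p = (q.1 * w, q.2 * w)

/-- Coordinatewise `S`-action on a filter product of `S`-acts. -/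
instance Filter.Product.instSMul {S : Type*} {ι : Type*} {l : Filter ι} {A : ι → Type*}
    [∀ i, SMul S (A i)] : SMul S (l.Product A) where
  smul s := Quotient.map' (fun f i => s • f i)
    (fun f g h => h.mono fun i hi => by dsimp only; rw [hi])

instance Filter.Product.instMulAction {S : Type*} [Monoid S] {ι : Type*} {l : Filter ι}
    {A : ι → Type*} [∀ i, MulAction S (A i)] : MulAction S (l.Product A) where
  one_smul x := Quotient.inductionOn' x fun f => Quotient.sound' <|
    Eventually.of_forall fun i => one_smul S (f i)
  mul_smul s t x := Quotient.inductionOn' x fun f => Quotient.sound' <|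
    Eventually.of_forall fun i => mul_smul s t (f i)

theorem condP_closed_under_ultraproducts (S : Type u) [Monoid S]
    (h : ∀ s t : S, Rset S s t = ∅ ∨ FGpair S (Rset S s t)) :
    ∀ (ι : Type v) (φ : Ultrafilter ι) (B : ι → Type w) [∀ i, MulAction S (B i)],
      (∀ i, CondP S (B i)) → CondP S ((↑φ : Filter ι).Product B) := by
  intro ι φ B _inst hB s t a b
  refine Quotient.inductionOn₂' a b fun f g hab => ?_
  have hev : ∀ᶠ i in (φ : Filter ι), s • f i = t • g i := Quotient.exact' hab
  have hT : {i | s • f i = t • g i} ∈ φ := hev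
  -- Rset is nonempty, so finitely generated
  rcases h s t with hemp | ⟨F, hFsub, hFgen⟩
  · exfalso
    obtain ⟨i, hi⟩ := Filter.nonempty_of_mem hT
    obtain ⟨c, u, v, _, _, huv⟩ := hB i s t (f i) (g i) hi
    have : (u, v) ∈ Rset S s t := huv
    rw [hemp] at this
    exact this
  · have key : ∀ i, s • f i = t • g i →
        ∃ q : S × S, q ∈ F ∧ ∃ c' : B i, f i = q.1 • c' ∧ g i = q.2 • c' := by
      intro i hi
      obtain ⟨c, u, v, hu, hv, huv⟩ := hB i s t (f i) (g i) hi
      obtain ⟨q, hqF, w, hw⟩ := hFgen (u, v) huv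
      have h1 : u = q.1 * w := congrArg Prod.fst hw
      have h2 : v = q.2 * w := congrArg Prod.snd hw
      exact ⟨q, hqF, w • c, by rw [hu, h1, mul_smul], by rw [hv, h2, mul_smul]⟩
    haveI : ∀ i, Nonempty (B i) := fun i => ⟨f i⟩
    choose! q hqF c' hc1 hc2 using key
    have hcover : {i | s • f i = t • g i} ⊆
        ⋃ p ∈ (F : Set (S × S)), {i | s • f i = t • g i ∧ q i = p} := by
      intro i hi
      exact Set.mem_biUnion (hqF i hi) ⟨hi, rfl⟩
    have hmem : (⋃ p ∈ (F : Set (S × S)), {i | s • f i = t • g i ∧ q i = p}) ∈ φ :=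
      Filter.mem_of_superset hT hcover
    obtain ⟨p, hpF, hp⟩ := (Ultrafilter.finite_biUnion_mem_iff F.finite_toSet).mp hmem
    refine ⟨Quotient.mk'' (fun i => c' i), p.1, p.2, ?_, ?_, hFsub hpF⟩
    · refine Quotient.sound' ?_
      filter_upwards [hp] with i hi
      rw [← hi.2]
      exact hc1 i hi.1
    · refine Quotient.sound' ?_
      filter_upwards [hp] with i hi
      rw [← hi.2]
      exact hc2 i hi.1
end

section
/- Let S be a monoid such that for all s, t ∈ S with s ≠ t, the set R(s,t) is either empty or finitely generated as a right S-subact of S × S. Then for all s, t ∈ S, either s•a ≠ t•a for every left S-act A satisfying Condition (EP) and every a ∈ A, or there exists a finite subset f ⊆ R(s,t) such that for every left S-act A satisfying Condition (EP) and every a ∈ A with s•a = t•a, there exist (u,v) ∈ f and c ∈ A with a = u•c and a = v•c. -/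
universe u

/-- Condition (EP) for a left `S`-act `A`. -/
def CondEP (S : Type*) [Monoid S] (A : Type*) [MulAction S A] : Prop :=
  ∀ (s t : S) (a : A), s • a = t • a →
    ∃ (c : A) (u v : S), a = u • c ∧ a = v • c ∧ s * u = t * v

theorem condEP_replacement_of_R_fg (S : Type u) [Monoid S]
    (h : ∀ s t : S, s ≠ t → Rset S s t = ∅ ∨ FGpair S (Rset S s t)) :
    ∀ s t : S,
      (∀ (A : Type u) [MulAction S A], CondEP S A → ∀ a : A, s • a ≠ t • a) ∨
      ∃ F : Finset (S × S), ↑F ⊆ Rset S s t ∧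
        ∀ (A : Type u) [MulAction S A], CondEP S A → ∀ a : A, s • a = t • a →
          ∃ p ∈ F, ∃ c : A, a = p.1 • c ∧ a = p.2 • c := by
  intro s t
  by_cases hst : s = t
  · right
    refine ⟨{(1, 1)}, ?_, ?_⟩
    · intro p hp
      simp at hp
      simp [hp, Rset, hst]
    · intro A _ _ a _
      exact ⟨(1, 1), by simp, a, by simp, by simp⟩
  · rcases h s t hst with hempty | ⟨F, hF, hgen⟩
    · left
      intro A _ hEP a hsa
      rcases hEP s t a hsa with ⟨c, u, v, _, _, huv⟩
      have : (u, v) ∈ Rset S s t := huv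
      simp [hempty] at this
    · right
      refine ⟨F, hF, ?_⟩
      intro A _ hEP a hsa
      rcases hEP s t a hsa with ⟨c, u, v, hu, hv, huv⟩
      rcases hgen (u, v) huv with ⟨q, hq, w, hw⟩
      have h1 : u = q.1 * w := congrArg Prod.fst hw
      have h2 : v = q.2 * w := congrArg Prod.snd hw
      exact ⟨q, hq, w • c, by rw [hu, h1, mul_smul], by rw [hv, h2, mul_smul]⟩
end

section
/- Let S be a monoid. The following are equivalent: (a) for all s, t ∈ S, the set R(s,t) is either empty or finitely generated as a right S-subact of S × S; (b) for every s, t ∈ S there exist finitely many pairs (u_1,v_1), …, (u_n,v_n) ∈ R(s,t) (possibly n = 0) such that for every left S-act B satisfying Condition (P) and all a, b ∈ B with s•a = t•b, there exist i ∈ {1,…,n} and d ∈ B with a = u_i•d and b = v_i•d. -/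
universe u

/-! For an act `B` with Condition (P), every solution of `s • a = t • b` is `(u • c, v • c)` with
`(u, v) ∈ R(s,t)`, so a generating set of `R(s,t)` yields the pairs required in (b); conversely,
`S` acting on itself has Condition (P) and its solutions of `s • a = t • b` are exactly `R(s,t)`,
so the pairs in (b) generate `R(s,t)`. The empty case of (a) is `FGpair` with no generators. -/

section

variable {S : Type*} [Monoid S]

theorem fgPair_empty : FGpair S ∅ :=
  ⟨∅, by simp, by simp⟩

theorem condP_self : CondP S S :=
  fun _ _ a b hab => ⟨1, a, b, by simp, by simp, hab⟩

theorem CondP.exists_mem_rset {B : Type*} [MulAction S B] (hB : CondP S B) {s t : S} {a b : B}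
    (hab : s • a = t • b) : ∃ p ∈ Rset S s t, ∃ c : B, a = p.1 • c ∧ b = p.2 • c := by
  obtain ⟨c, u, v, ha, hb, huv⟩ := hB s t a b hab
  exact ⟨(u, v), huv, c, ha, hb⟩

theorem CondP.exists_smul_eq_of_generates {B : Type*} [MulAction S B] (hB : CondP S B)
    {s t : S} {F : Finset (S × S)}
    (hF : ∀ p ∈ Rset S s t, ∃ q ∈ F, ∃ w : S, p = (q.1 * w, q.2 * w)) {a b : B}
    (hab : s • a = t • b) : ∃ q ∈ F, ∃ d : B, a = q.1 • d ∧ b = q.2 • d := by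
  obtain ⟨p, hp, c, ha, hb⟩ := hB.exists_mem_rset hab
  obtain ⟨q, hq, w, rfl⟩ := hF p hp
  exact ⟨q, hq, w • c, by rw [ha, mul_smul], by rw [hb, mul_smul]⟩

end

theorem fgPair_rset_iff {S : Type u} [Monoid S] (s t : S) :
    FGpair S (Rset S s t) ↔ ∃ F : Finset (S × S), ↑F ⊆ Rset S s t ∧
      ∀ (B : Type u) [MulAction S B], CondP S B → ∀ a b : B, s • a = t • b →
        ∃ p ∈ F, ∃ d : B, a = p.1 • d ∧ b = p.2 • d := by
  constructor
  · rintro ⟨F, hFR, hF⟩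
    exact ⟨F, hFR, fun B _ hB _ _ hab => hB.exists_smul_eq_of_generates hF hab⟩
  · rintro ⟨F, hFR, hF⟩
    refine ⟨F, hFR, fun p hp => ?_⟩
    obtain ⟨q, hq, d, h₁, h₂⟩ := hF S condP_self p.1 p.2 hp
    exact ⟨q, hq, d, Prod.ext h₁ h₂⟩

theorem condP_R_fg_iff_replacement (S : Type u) [Monoid S] :
    (∀ s t : S, Rset S s t = ∅ ∨ FGpair S (Rset S s t)) ↔
      ∀ s t : S, ∃ F : Finset (S × S), ↑F ⊆ Rset S s t ∧
        ∀ (B : Type u) [MulAction S B], CondP S B → ∀ a b : B, s • a = t • b →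
          ∃ p ∈ F, ∃ d : B, a = p.1 • d ∧ b = p.2 • d := by
  have hempty (s t : S) : Rset S s t = ∅ ∨ FGpair S (Rset S s t) ↔ FGpair S (Rset S s t) :=
    ⟨fun h => h.elim (fun h => h ▸ fgPair_empty) id, Or.inr⟩
  exact forall₂_congr fun s t => (hempty s t).trans (fgPair_rset_iff s t)
end

section
/- Let S be a monoid. The following are equivalent: (a) for all s, t ∈ S, the set r(s,t) is either empty or finitely generated as a right ideal of S; (b) for every s, t ∈ S there exist finitely many elements u_1, …, u_m ∈ r(s,t) (possibly m = 0) such that for every left S-act B satisfying Condition (E) and every a ∈ B with s•a = t•a, there exist i ∈ {1,…,m} and c ∈ B with a = u_i•c. -/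
universe u

/-- Condition (E) for a left `S`-act `A`. -/
def CondE (S : Type*) [Monoid S] (A : Type*) [MulAction S A] : Prop :=
  ∀ (s t : S) (a : A), s • a = t • a →
    ∃ (c : A) (u : S), a = u • c ∧ s * u = t * u

/-- `r(s,t) = {u | s*u = t*u}`. -/
def rset (S : Type*) [Monoid S] (s t : S) : Set S :=
  {u | s * u = t * u}

/-- A subset of `S` is finitely generated as a right ideal of `S`. -/
def FGideal (S : Type*) [Monoid S] (I : Set S) : Prop :=
  ∃ F : Finset S, ↑F ⊆ I ∧ ∀ x ∈ I, ∃ p ∈ F, ∃ w : S, x = p * w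

/-!
Condition (E) says that every solution `a` of `s • a = t • a` has the form `u • c` with
`u ∈ r(s,t)`, so a generating set of `r(s,t)` serves as the `u_i` in every (E)-act.
Conversely, `S` acting on itself satisfies (E) and its solutions of `s • a = t • a` are
exactly the elements of `r(s,t)`, so the `u_i` must generate `r(s,t)`.
-/

lemma fGideal_empty (S : Type*) [Monoid S] : FGideal S ∅ :=
  ⟨∅, by simp, by simp⟩

lemma condE_self (S : Type*) [Monoid S] : CondE S S :=
  fun _ _ a h => ⟨1, a, (mul_one a).symm, h⟩

lemma CondE.exists_eq_smul_of_generates {S A : Type*} [Monoid S] [MulAction S A]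
    (hA : CondE S A) {s t : S} {F : Finset S}
    (hF : ∀ x ∈ rset S s t, ∃ p ∈ F, ∃ w : S, x = p * w) {a : A} (ha : s • a = t • a) :
    ∃ p ∈ F, ∃ c : A, a = p • c := by
  obtain ⟨c, u, rfl, hu⟩ := hA s t a ha
  obtain ⟨p, hp, w, rfl⟩ := hF u hu
  exact ⟨p, hp, w • c, mul_smul p w c⟩

theorem condE_r_fg_iff_replacement (S : Type u) [Monoid S] :
    (∀ s t : S, rset S s t = ∅ ∨ FGideal S (rset S s t)) ↔
      ∀ s t : S, ∃ F : Finset S, ↑F ⊆ rset S s t ∧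
        ∀ (B : Type u) [MulAction S B], CondE S B → ∀ a : B, s • a = t • a →
          ∃ p ∈ F, ∃ c : B, a = p • c := by
  constructor
  · intro h s t
    obtain ⟨F, hFr, hFgen⟩ := (h s t).elim (fun hempty => hempty ▸ fGideal_empty S) id
    exact ⟨F, hFr, fun B _ hB a ha => hB.exists_eq_smul_of_generates hFgen ha⟩
  · intro h s t
    obtain ⟨F, hFr, hF⟩ := h s t
    exact Or.inr ⟨F, hFr, fun x hx => hF S (condE_self S) x hx⟩
end

section
/- Let S be a monoid. The following are equivalent: (a) for all s, t ∈ S, the set sS ∩ tS is either empty or finitely generated as a right ideal of S; (b) for every s, t ∈ S there exist finitely many elements u_1, …, u_n ∈ sS ∩ tS (possibly n = 0) such that for every left S-act B satisfying Condition (W) and all a, b ∈ B with s•a = t•b, there exist i ∈ {1,…,n} and d ∈ B with s•a = u_i•d (and hence t•b = u_i•d). -/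
universe u

/-- Condition (W) for a left `S`-act `A`. -/
def CondW (S : Type*) [Monoid S] (A : Type*) [MulAction S A] : Prop :=
  ∀ (s t : S) (a b : A), s • a = t • b →
    ∃ (c : A) (u : S), (∃ s' t' : S, u = s * s' ∧ u = t * t') ∧ s • a = u • c

/-- The right ideal `sS ∩ tS`. -/
def interIdeal (S : Type*) [Monoid S] (s t : S) : Set S :=
  {x | ∃ s' t' : S, x = s * s' ∧ x = t * t'}

theorem condW_inter_fg_iff_replacement (S : Type u) [Monoid S] :
    (∀ s t : S, interIdeal S s t = ∅ ∨ FGideal S (interIdeal S s t)) ↔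
      ∀ s t : S, ∃ F : Finset S, ↑F ⊆ interIdeal S s t ∧
        ∀ (B : Type u) [MulAction S B], CondW S B → ∀ a b : B, s • a = t • b →
          ∃ p ∈ F, ∃ d : B, s • a = p • d := by
  constructor
  · intro h s t
    rcases h s t with hemp | ⟨F, hF, hgen⟩
    · refine ⟨∅, by simp, ?_⟩
      intro B _ hW a b hab
      obtain ⟨c, u, hu, _⟩ := hW s t a b hab
      exact absurd hu (Set.eq_empty_iff_forall_notMem.mp hemp u)
    · refine ⟨F, hF, ?_⟩
      intro B _ hW a b hab
      obtain ⟨c, u, hu, hsa⟩ := hW s t a b hab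
      obtain ⟨p, hp, w, hw⟩ := hgen u hu
      exact ⟨p, hp, w • c, by rw [hsa, hw, mul_smul]⟩
  · intro h s t
    obtain ⟨F, hF, hgen⟩ := h s t
    rcases Set.eq_empty_or_nonempty (interIdeal S s t) with hemp | _
    · exact Or.inl hemp
    · refine Or.inr ⟨F, hF, ?_⟩
      intro x ⟨s', t', hs', ht'⟩
      have hW : CondW S S := by
        intro s t a b hab
        exact ⟨1, s * a, ⟨a, b, rfl, by simpa [smul_eq_mul] using hab⟩,
          by simp [smul_eq_mul]⟩
      have : (s : S) • s' = t • t' := by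
        simp only [smul_eq_mul]; rw [← hs', ← ht']
      obtain ⟨p, hp, d, hd⟩ := hgen S hW s' t' this
      exact ⟨p, hp, d, by rw [hs']; simpa [smul_eq_mul] using hd⟩
end

section
/- Let S be a monoid. The following are equivalent: (a) for every t ∈ S, the set R(t,t) is either empty or finitely generated as a right S-subact of S × S; (b) for every t ∈ S there exist finitely many pairs (u_1,v_1), …, (u_q,v_q) ∈ R(t,t) (possibly q = 0) such that for every left S-act B satisfying Condition (PWP) and all a, b ∈ B with t•a = t•b, there exist i ∈ {1,…,q} and d ∈ B with a = u_i•d and b = v_i•d. -/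
/-!
Since `(1, 1) ∈ R(t,t)`, condition (a) just says that every `R(t,t)` is finitely generated.
A generating set works for (b): the (PWP) factorisation `a = u • c`, `b = v • c` has
`(u, v) ∈ R(t,t)`, which factors through a generator. Conversely `S` acting on itself satisfies
(PWP), and (b) applied to `B = S` and `(a, b) ∈ R(t,t)` exhibits a generator for each element.
-/

universe u

/-- Condition (PWP) for a left `S`-act `A`. -/
def CondPWP (S : Type*) [Monoid S] (A : Type*) [MulAction S A] : Prop :=
  ∀ (t : S) (a b : A), t • a = t • b →
    ∃ (c : A) (u v : S), a = u • c ∧ b = v • c ∧ t * u = t * v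

section

variable {S : Type*} [Monoid S]

theorem one_one_mem_Rset_self (t : S) : ((1 : S), (1 : S)) ∈ Rset S t t := rfl

theorem condPWP_self : CondPWP S S := fun _ a b hab =>
  ⟨1, a, b, (mul_one a).symm, (mul_one b).symm, hab⟩

theorem CondPWP.exists_smul_of_generates {t : S} {F : Finset (S × S)}
    (hgen : ∀ p ∈ Rset S t t, ∃ q ∈ F, ∃ w : S, p = (q.1 * w, q.2 * w))
    {B : Type*} [MulAction S B] (hB : CondPWP S B) {a b : B} (hab : t • a = t • b) :
    ∃ p ∈ F, ∃ d : B, a = p.1 • d ∧ b = p.2 • d := by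
  obtain ⟨c, u, v, rfl, rfl, huv⟩ := hB t a b hab
  obtain ⟨q, hqF, w, hw⟩ := hgen (u, v) huv
  obtain ⟨rfl, rfl⟩ := Prod.mk.inj hw
  exact ⟨q, hqF, w • c, mul_smul .., mul_smul ..⟩

end

theorem condPWP_R_fg_iff_replacement (S : Type u) [Monoid S] :
    (∀ t : S, Rset S t t = ∅ ∨ FGpair S (Rset S t t)) ↔
      ∀ t : S, ∃ F : Finset (S × S), ↑F ⊆ Rset S t t ∧
        ∀ (B : Type u) [MulAction S B], CondPWP S B → ∀ a b : B, t • a = t • b →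
          ∃ p ∈ F, ∃ d : B, a = p.1 • d ∧ b = p.2 • d := by
  constructor
  · intro h t
    obtain ⟨F, hF, hgen⟩ :=
      (h t).resolve_left (Set.nonempty_of_mem (one_one_mem_Rset_self t)).ne_empty
    exact ⟨F, hF, fun B _ hB _ _ hab => hB.exists_smul_of_generates hgen hab⟩
  · intro h t
    obtain ⟨F, hF, hrep⟩ := h t
    refine .inr ⟨F, hF, fun p hp => ?_⟩
    obtain ⟨q, hqF, d, h1, h2⟩ := hrep S condPWP_self p.1 p.2 hp
    exact ⟨q, hqF, d, Prod.ext h1 h2⟩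
end

section
/- Let S be a monoid containing an element 0 such that x*y = 0 for all x, y ∈ S with x ≠ 1 and y ≠ 1, and suppose the set {x ∈ S : x ≠ 1} is infinite. Then for all s, t ∈ S with s ≠ 1, t ≠ 1, s ≠ 0 and t ≠ 0, the set R(s,t) = {(u,v) ∈ S × S : s*u = t*v} is NOT finitely generated as a right S-subact of S × S: there is no finite subset F ⊆ R(s,t) such that every (u,v) ∈ R(s,t) equals (p*w, q*w) for some (p,q) ∈ F and w ∈ S. -/
theorem R_not_fg_of_null_monoid {S : Type*} [Monoid S] (z : S)
    (hz : ∀ x y : S, x ≠ 1 → y ≠ 1 → x * y = z)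
    (hinf : {x : S | x ≠ 1}.Infinite) :
    ∀ s t : S, s ≠ 1 → t ≠ 1 → s ≠ z → t ≠ z →
      ¬ ∃ F : Finset (S × S), ↑F ⊆ Rset S s t ∧
          ∀ p ∈ Rset S s t, ∃ q ∈ F, ∃ w : S, p = (q.1 * w, q.2 * w) := by
  intro s t hs ht hsz htz
  rintro ⟨F, hFsub, hgen⟩
  have hT : ({x : S | x ≠ 1} \ {z}).Infinite := hinf.diff (Set.finite_singleton z)
  obtain ⟨b, hb1, hbz⟩ := hT.nonempty
  have hT2 : (({x : S | x ≠ 1} \ {z}) \ {b}).Infinite := hT.diff (Set.finite_singleton b)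
  have key : ∀ a ∈ (({x : S | x ≠ 1} \ {z}) \ {b}), (a, b) ∈ F := by
    rintro a ⟨⟨ha1, haz⟩, hab⟩
    simp only [Set.mem_singleton_iff] at hab haz hbz
    have hR : (a, b) ∈ Rset S s t := by
      show s * a = t * b
      rw [hz s a hs ha1, hz t b ht hb1]
    obtain ⟨q, hqF, w, hw⟩ := hgen _ hR
    have h1 : a = q.1 * w := congrArg Prod.fst hw
    have h2 : b = q.2 * w := congrArg Prod.snd hw
    by_cases hw1 : w = 1
    · subst hw1
      rw [mul_one] at h1 h2
      have : (a, b) = q := by rw [h1, h2]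
      rwa [this]
    · exfalso
      by_cases hq1 : q.1 = 1
      · have ha : a = w := by rw [h1, hq1, one_mul]
        by_cases hq2 : q.2 = 1
        · exact hab (by rw [ha, h2, hq2, one_mul])
        · exact hbz (by rw [h2, hz _ _ hq2 hw1])
      · exact haz (by rw [h1, hz _ _ hq1 hw1])
  have hsub : (({x : S | x ≠ 1} \ {z}) \ {b}) ⊆ Prod.fst '' (↑F : Set (S × S)) :=
    fun a ha => ⟨(a, b), key a ha, rfl⟩
  exact hT2 ((F.finite_toSet.image Prod.fst).subset hsub)
end

section
/- Consider S = WithTop ℕ with the commutative monoid operation x*y := min x y (identity element ⊤). For every n : ℕ, the set R(n,n) = {(u,v) ∈ S × S : min (↑n) u = min (↑n) v} is NOT finitely generated as a right S-subact of S × S: there is no finite subset F ⊆ R(n,n) such that every (u,v) ∈ R(n,n) equals (min p w, min q w) for some (p,q) ∈ F and w ∈ S. -/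
theorem R_diag_not_fg_min_monoid (n : ℕ) :
    ¬ ∃ F : Finset (WithTop ℕ × WithTop ℕ),
        (↑F ⊆ {p : WithTop ℕ × WithTop ℕ | min (n : WithTop ℕ) p.1 = min (n : WithTop ℕ) p.2}) ∧
        ∀ p ∈ {p : WithTop ℕ × WithTop ℕ | min (n : WithTop ℕ) p.1 = min (n : WithTop ℕ) p.2},
          ∃ q ∈ F, ∃ w : WithTop ℕ, p = (min q.1 w, min q.2 w) := by
  rintro ⟨F, hF, hgen⟩
  have hmem : ∀ k : ℕ, (((n + k : ℕ) : WithTop ℕ), (⊤ : WithTop ℕ)) ∈ F := by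
    intro k
    have hin : (((n + k : ℕ) : WithTop ℕ), (⊤ : WithTop ℕ)) ∈
        {p : WithTop ℕ × WithTop ℕ | min (n : WithTop ℕ) p.1 = min (n : WithTop ℕ) p.2} := by
      simp only [Set.mem_setOf_eq, inf_top_eq]
      have : (n : WithTop ℕ) ≤ ((n + k : ℕ) : WithTop ℕ) := by
        exact_mod_cast Nat.le_add_right n k
      exact min_eq_left this
    obtain ⟨q, hq, w, hw⟩ := hgen _ hin
    have h2 : (⊤ : WithTop ℕ) = min q.2 w := congrArg Prod.snd hw
    have hw_top : w = ⊤ := by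
      rcases min_eq_top.mp h2.symm with ⟨_, hw⟩; exact hw
    have h1 : ((n + k : ℕ) : WithTop ℕ) = min q.1 w := congrArg Prod.fst hw
    have hq1 : q.1 = ((n + k : ℕ) : WithTop ℕ) := by
      rw [hw_top, inf_top_eq] at h1; exact h1.symm
    have hq2 : q.2 = ⊤ := (min_eq_top.mp h2.symm).1
    have : q = (((n + k : ℕ) : WithTop ℕ), (⊤ : WithTop ℕ)) := Prod.ext hq1 hq2
    rwa [this] at hq
  have hinf : (↑F : Set (WithTop ℕ × WithTop ℕ)).Infinite := by
    refine Set.infinite_of_injective_forall_mem (f := fun k : ℕ => (((n + k : ℕ) : WithTop ℕ), (⊤ : WithTop ℕ))) ?_ hmem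
    intro a b hab
    have := congrArg Prod.fst hab
    simp only at this
    exact_mod_cast Nat.add_left_cancel (by exact_mod_cast this)
  
  exact hinf F.finite_toSet
end

section
/- Consider S = WithTop ℕ with the commutative monoid operation x*y := min x y (identity element ⊤). For all s, t ∈ S with s < t, the set R(s,t) = {(u,v) ∈ S × S : min s u = min t v} equals {(min s w, min s w) : w ∈ S} ∪ {(w, min s w) : w ∈ S}; that is, R(s,t) is generated as a right S-subact of S × S by the two elements (s,s) and (⊤,s). -/
lemma R_min_key (s t u v : WithTop ℕ) (h : s < t) :
    min s u = min t v ↔ v = min s u := by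
  constructor
  · intro he
    rcases le_or_gt t v with hv | hv
    · exfalso
      rw [min_eq_left hv] at he
      exact absurd (he ▸ min_le_left s u) (not_le.2 h)
    · rw [min_eq_right hv.le] at he
      exact he.symm
  · rintro rfl
    rw [min_eq_right (le_trans (min_le_left s u) h.le)]

lemma R_min_set_eq (s t : WithTop ℕ) (h : s < t) :
    {p : WithTop ℕ × WithTop ℕ | min s p.1 = min t p.2} =
        {p : WithTop ℕ × WithTop ℕ | ∃ w : WithTop ℕ, p = (min s w, min s w)} ∪
          {p : WithTop ℕ × WithTop ℕ | ∃ w : WithTop ℕ, p = (w, min s w)} := by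
  ext ⟨u, v⟩
  simp only [Set.mem_setOf_eq, Set.mem_union, Prod.mk.injEq, Prod.ext_iff]
  rw [R_min_key s t u v h]
  constructor
  · rintro rfl
    exact Or.inr ⟨u, rfl, rfl⟩
  · rintro (⟨w, rfl, rfl⟩ | ⟨w, rfl, rfl⟩)
    · rw [← min_assoc, min_self]
    · rfl

theorem R_min_monoid_two_generators (s t : WithTop ℕ) (h : s < t) :
    {p : WithTop ℕ × WithTop ℕ | min s p.1 = min t p.2} =
        {p : WithTop ℕ × WithTop ℕ | ∃ w : WithTop ℕ, p = (min s w, min s w)} ∪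
          {p : WithTop ℕ × WithTop ℕ | ∃ w : WithTop ℕ, p = (w, min s w)} ∧
      {p : WithTop ℕ × WithTop ℕ | min s p.1 = min t p.2} =
        {p : WithTop ℕ × WithTop ℕ | ∃ w : WithTop ℕ, p = (min s w, min s w)} ∪
          {p : WithTop ℕ × WithTop ℕ | ∃ w : WithTop ℕ, p = (min ⊤ w, min s w)} := by
  refine ⟨R_min_set_eq s t h, ?_⟩
  simpa [top_inf_eq] using R_min_set_eq s t h
end
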